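/- arXiv:1401.7850 — 4 statements merged into one kernel-verified Lean document; each statement's English description precedes it below -/
import Mathlib

section
/- (1) For all integers 1 ≤ i ≤ n−1 one has σ·c_H·(n−1)^{H−1/2}·I_n(i) ≤ j_n^H(i) ≤ σ·c_H·n^{H−1/2}·I_n(i), where I_n(i) = ∫_{i−1}^i x^{1/2−H} φ_n^H(x) dx and φ_n^H(x) = (n−x)^{H−1/2} − (n−1−x)^{H−1/2}. (2) For all integers n > 1 one has g_H ≤ g_n^H ≤ g_H·(1 + 1/(n−1))^{H−1/2}. -/
open MeasureTheory Filter Set ProbabilityTheory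

noncomputable section

/-- The normalizing constant `c_H`. -/
def cH (H : ℝ) : ℝ :=
  Real.sqrt (2 * H * Real.Gamma (3 / 2 - H) / (Real.Gamma (H + 1 / 2) * Real.Gamma (2 - 2 * H)))

/-- The constant `C_H = c_H (H - 1/2)`. -/
def CH (H : ℝ) : ℝ := cH H * (H - 1 / 2)

/-- The kernel `k_H(t,s)`. -/
def kerH (H t s : ℝ) : ℝ :=
  CH H * s ^ (1 / 2 - H) * ∫ u in s..t, u ^ (H - 1 / 2) * (u - s) ^ (H - 3 / 2)

/-- The coefficient `J_n^{(N,H)}(i)` (with volatility `σ`). -/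
def JN (σ H : ℝ) (N n i : ℕ) : ℝ :=
  σ * Real.sqrt N * ∫ u in (((i : ℝ) - 1) / N)..((i : ℝ) / N),
    (kerH H ((n : ℝ) / N) u - kerH H (((n : ℝ) - 1) / N) u)

/-- The coefficient `g_n^{(N,H)}` (with volatility `σ`). -/
def gNH (σ H : ℝ) (N n : ℕ) : ℝ :=
  σ * Real.sqrt N * ∫ u in (((n : ℝ) - 1) / N)..((n : ℝ) / N), kerH H ((n : ℝ) / N) u

/-- The rescaled coefficient `j_n^H(i)`. -/
def jH (σ H : ℝ) (n i : ℕ) : ℝ :=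
  σ * CH H * ∫ x in ((i : ℝ) - 1)..(i : ℝ),
    x ^ (1 / 2 - H) *
      ∫ v in (0 : ℝ)..1, (v + n - 1) ^ (H - 1 / 2) * (v + n - 1 - x) ^ (H - 3 / 2)

/-- The rescaled coefficient `g_n^H`. -/
def gnH (σ H : ℝ) (n : ℕ) : ℝ :=
  σ * CH H * ∫ x in ((n : ℝ) - 1)..(n : ℝ),
    x ^ (1 / 2 - H) * ((n : ℝ) - x) ^ (H - 1 / 2) *
      ∫ y in (0 : ℝ)..1, (y * ((n : ℝ) - x) + x) ^ (H - 1 / 2) * y ^ (H - 3 / 2)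

/-- The constant `g_H = σ c_H / (H + 1/2)`. -/
def gH (σ H : ℝ) : ℝ := σ * cH H / (H + 1 / 2)

/-- The autocovariance `ρ_h(k)` of fBm with Hurst parameter `h`. -/
def rho (h : ℝ) (k : ℕ) : ℝ :=
  (((k : ℝ) + 1) ^ (2 * h) + ((k : ℝ) - 1) ^ (2 * h) - 2 * (k : ℝ) ^ (2 * h)) / 2

/-- The function `φ_n^H(x) = (n-x)^{H-1/2} - (n-1-x)^{H-1/2}`. -/
def phiH (H : ℝ) (n : ℕ) (x : ℝ) : ℝ :=
  ((n : ℝ) - x) ^ (H - 1 / 2) - ((n : ℝ) - 1 - x) ^ (H - 1 / 2)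

/-- The quantity `I_n(i)`. -/
def InH (H : ℝ) (n i : ℕ) : ℝ :=
  ∫ x in ((i : ℝ) - 1)..(i : ℝ), x ^ (1 / 2 - H) * phiH H n x

/-- The function `g_n(x) = x^{1/2-H} φ_n^H(x)`. -/
def gmap (H : ℝ) (n : ℕ) (x : ℝ) : ℝ := x ^ (1 / 2 - H) * phiH H n x

/-- A point of the binary tree (encoded by the booleans `x 0, …, x (n-2)`, where `true ↦ 1` and
`false ↦ -1`) is an arbitrage point at level `n` of the `N`-period fractional binary market if
`|Y_n^{(N,H)}(x) + a_n^{(N)}| ≥ g_n^{(N,H)}`. -/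
def isArb (σ H : ℝ) (a : ℝ → ℝ) (N n : ℕ) (x : ℕ → Bool) : Prop :=
  gNH σ H N n ≤
    |(∑ i ∈ Finset.range (n - 1), JN σ H N n (i + 1) * (if x i then (1 : ℝ) else -1)) +
      a ((n : ℝ) / N) / N|

/-- The cardinality `|𝒜_n^{(N,H)}|` of the set of arbitrage points at level `n`. -/
def arbCard (σ H : ℝ) (a : ℝ → ℝ) (N n : ℕ) : ℕ :=
  {x : Fin (n - 1) → Bool |
    isArb σ H a N n (fun i => if h : i < n - 1 then x ⟨i, h⟩ else false)}.ncard

/-- The cardinality `|𝒜_𝒫^{(N,H)}|` of the set of arbitrage paths. -/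
def arbPathCard (σ H : ℝ) (a : ℝ → ℝ) (N : ℕ) : ℕ :=
  {x : Fin (N - 1) → Bool | ∃ n, 1 ≤ n ∧ n ≤ N ∧
    isArb σ H a N n (fun i => if h : i < N - 1 then x ⟨i, h⟩ else false)}.ncard

/-!
Both estimates freeze the slowly varying factor `u ^ (H - 1/2)` of the kernel at the ends of
its range. In `j_n^H(i)` the factor `(v + n - 1) ^ (H - 1/2)` lies between `(n - 1) ^ (H - 1/2)`
and `n ^ (H - 1/2)`, while `∫₀¹ (v + n - 1 - x) ^ (H - 3/2) dv = φ_n^H(x) / (H - 1/2)`. In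
`g_n^H` the factor `(y (n - x) + x) ^ (H - 1/2)` lies between `x ^ (H - 1/2)` and
`n ^ (H - 1/2)`, while `∫₀¹ y ^ (H - 3/2) dy = 1 / (H - 1/2)`; the remaining `x ^ (1/2 - H)` is
cancelled (lower bound) or bounded by `(n - 1) ^ (1/2 - H)` (upper bound), and
`∫_{n-1}^n (n - x) ^ (H - 1/2) dx = 1 / (H + 1/2)`. Finally `C_H / (H - 1/2) = c_H`.
-/

theorem stronglyMeasurable_intervalIntegral_of_measurable_uncurry {F : ℝ → ℝ → ℝ}
    (hF : Measurable (Function.uncurry F)) {a b : ℝ} (hab : a ≤ b) :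
    StronglyMeasurable fun x => ∫ v in a..b, F x v := by
  simp_rw [intervalIntegral.integral_of_le hab]
  exact hF.stronglyMeasurable.integral_prod_right' (f := Function.uncurry F)

theorem intervalIntegral.integral_mem_Icc_of_le_of_le {f g h : ℝ → ℝ} {a b : ℝ} (hab : a ≤ b)
    (hf : IntervalIntegrable f volume a b) (hh : IntervalIntegrable h volume a b)
    (hg : AEStronglyMeasurable g (volume.restrict (Ioc a b)))
    (hfg : ∀ x ∈ Icc a b, f x ≤ g x) (hgh : ∀ x ∈ Icc a b, g x ≤ h x) :
    ∫ x in a..b, g x ∈ Icc (∫ x in a..b, f x) (∫ x in a..b, h x) := by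
  have hg' : IntervalIntegrable g volume a b := by
    rw [intervalIntegrable_iff_integrableOn_Ioc_of_le hab] at hf hh ⊢
    refine integrable_of_le_of_le hg ?_ ?_ hf hh <;>
      filter_upwards [ae_restrict_mem measurableSet_Ioc] with x hx
    exacts [hfg x (Ioc_subset_Icc_self hx), hgh x (Ioc_subset_Icc_self hx)]
  exact ⟨integral_mono_on hab hf hg' hfg, integral_mono_on hab hg' hh hgh⟩

theorem intervalIntegral.integral_mul_mem_Icc {w f : ℝ → ℝ} {a b lo hi : ℝ} (hab : a ≤ b)
    (hw : ContinuousOn w (Icc a b)) (hf : IntervalIntegrable f volume a b)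
    (hf0 : ∀ x ∈ Icc a b, 0 ≤ f x) (hlo : ∀ x ∈ Icc a b, lo ≤ w x)
    (hhi : ∀ x ∈ Icc a b, w x ≤ hi) :
    ∫ x in a..b, w x * f x ∈ Icc (lo * ∫ x in a..b, f x) (hi * ∫ x in a..b, f x) := by
  rw [← intervalIntegral.integral_const_mul, ← intervalIntegral.integral_const_mul]
  exact integral_mem_Icc_of_le_of_le hab (hf.const_mul lo) (hf.const_mul hi)
    (hf.continuousOn_mul (by rwa [uIcc_of_le hab])).1.aestronglyMeasurable
    (fun x hx => mul_le_mul_of_nonneg_right (hlo x hx) (hf0 x hx))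
    (fun x hx => mul_le_mul_of_nonneg_right (hhi x hx) (hf0 x hx))

section HurstKernel

variable {H : ℝ}

theorem integral_shift_rpow_mul_rpow_mem_Icc (hH : 1/2 < H) {m x : ℝ} (hm : 1 ≤ m)
    (hx : x ≤ m - 1) :
    ∫ v in (0:ℝ)..1, (v + m - 1) ^ (H - 1/2) * (v + m - 1 - x) ^ (H - 3/2) ∈
      Icc ((m - 1) ^ (H - 1/2) * (((m - x) ^ (H - 1/2) - (m - 1 - x) ^ (H - 1/2)) / (H - 1/2)))
        (m ^ (H - 1/2) * (((m - x) ^ (H - 1/2) - (m - 1 - x) ^ (H - 1/2)) / (H - 1/2))) := by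
  have hq : (-1:ℝ) < H - 3/2 := by linarith
  have hf : IntervalIntegrable (fun v : ℝ => (v + m - 1 - x) ^ (H - 3/2)) volume 0 1 := by
    simpa [sub_sub, add_sub_assoc] using
      (intervalIntegral.intervalIntegrable_rpow' hq (a := 0 + (m - 1 - x))
        (b := 1 + (m - 1 - x))).comp_add_right (m - 1 - x)
  have hf_int : ∫ v in (0:ℝ)..1, (v + m - 1 - x) ^ (H - 3/2) =
      ((m - x) ^ (H - 1/2) - (m - 1 - x) ^ (H - 1/2)) / (H - 1/2) := by
    simp_rw [sub_sub, add_sub_assoc]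
    rw [intervalIntegral.integral_comp_add_right (fun v => v ^ (H - 3/2)),
      integral_rpow (Or.inl hq)]
    ring_nf
  rw [← hf_int]
  refine intervalIntegral.integral_mul_mem_Icc zero_le_one ?_ hf
    (fun v hv => Real.rpow_nonneg (by linarith [hv.1]) _)
    (fun v hv => Real.rpow_le_rpow (by linarith) (by linarith [hv.1]) (by linarith))
    (fun v hv => Real.rpow_le_rpow (by linarith [hv.1]) (by linarith [hv.2]) (by linarith))
  exact (Continuous.rpow_const (by fun_prop) fun _ => Or.inr (by linarith)).continuousOn

theorem integral_affine_rpow_mul_rpow_mem_Icc (hH : 1/2 < H) {m x : ℝ} (hx : 0 ≤ x)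
    (hxm : x ≤ m) :
    ∫ y in (0:ℝ)..1, (y * (m - x) + x) ^ (H - 1/2) * y ^ (H - 3/2) ∈
      Icc (x ^ (H - 1/2) / (H - 1/2)) (m ^ (H - 1/2) / (H - 1/2)) := by
  have hq : (-1:ℝ) < H - 3/2 := by linarith
  have hf_int : ∫ y in (0:ℝ)..1, y ^ (H - 3/2) = 1 / (H - 1/2) := by
    rw [integral_rpow (Or.inl hq), show H - 3/2 + 1 = H - 1/2 by ring, Real.one_rpow,
      Real.zero_rpow (by linarith)]
    ring
  rw [div_eq_mul_one_div (x ^ _), div_eq_mul_one_div (m ^ _), ← hf_int]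
  refine intervalIntegral.integral_mul_mem_Icc zero_le_one ?_
    (intervalIntegral.intervalIntegrable_rpow' hq) (fun y hy => Real.rpow_nonneg hy.1 _)
    (fun y hy => Real.rpow_le_rpow hx (by nlinarith [hy.1]) (by linarith))
    (fun y hy => Real.rpow_le_rpow (by nlinarith [hy.1]) (by nlinarith [hy.2]) (by linarith))
  exact (Continuous.rpow_const (by fun_prop) fun _ => Or.inr (by linarith)).continuousOn

theorem mul_CH_mul_div (hH : H - 1/2 ≠ 0) (a K : ℝ) :
    a * CH H * (K / (H - 1/2)) = a * cH H * K := by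
  rw [CH, mul_assoc a, mul_assoc (cH H), mul_div_cancel₀ K hH, mul_assoc]

theorem CH_nonneg (hH : 1/2 ≤ H) : 0 ≤ CH H :=
  mul_nonneg (Real.sqrt_nonneg _) (by linarith)

theorem jH_mem_Icc {σ : ℝ} (hσ : 0 ≤ σ) (hH₀ : 1/2 < H) (hH₁ : H < 3/2) {n i : ℕ}
    (hi : 1 ≤ i) (hin : i ≤ n - 1) :
    jH σ H n i ∈ Icc (σ * cH H * ((n : ℝ) - 1) ^ (H - 1/2) * InH H n i)
      (σ * cH H * (n : ℝ) ^ (H - 1/2) * InH H n i) := by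
  have hp : 0 < H - 1/2 := by linarith
  have hiR : (1:ℝ) ≤ i := by exact_mod_cast hi
  have hin' : (i:ℝ) ≤ n - 1 := by
    rw [le_sub_iff_add_le]; exact_mod_cast (by omega : i + 1 ≤ n)
  have hInt : IntervalIntegrable (fun x => x ^ (1/2 - H) * phiH H n x) volume (i - 1) i := by
    refine (intervalIntegral.intervalIntegrable_rpow' (by linarith)).mul_continuousOn ?_
    refine Continuous.continuousOn ?_
    unfold phiH
    exact ((continuous_const.sub continuous_id).rpow_const fun _ => Or.inr hp.le).sub
      ((continuous_const.sub continuous_id).rpow_const fun _ => Or.inr hp.le)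
  have hweight : ∀ x ∈ Icc ((i:ℝ) - 1) i, 0 ≤ x ^ (1/2 - H) :=
    fun x hx => Real.rpow_nonneg (by linarith [hx.1]) _
  have hinner : ∀ x ∈ Icc ((i:ℝ) - 1) i,
      ∫ v in (0:ℝ)..1, (v + n - 1) ^ (H - 1/2) * (v + n - 1 - x) ^ (H - 3/2) ∈
        Icc (((n:ℝ) - 1) ^ (H - 1/2) * (phiH H n x / (H - 1/2)))
          ((n:ℝ) ^ (H - 1/2) * (phiH H n x / (H - 1/2))) :=
    fun x hx => integral_shift_rpow_mul_rpow_mem_Icc hH₀ (by linarith) (by linarith [hx.2])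
  have hbounds := intervalIntegral.integral_mem_Icc_of_le_of_le (by linarith)
    (hInt.const_mul (((n:ℝ) - 1) ^ (H - 1/2) / (H - 1/2)))
    (hInt.const_mul ((n:ℝ) ^ (H - 1/2) / (H - 1/2)))
    (g := fun x => x ^ (1/2 - H) *
      ∫ v in (0:ℝ)..1, (v + n - 1) ^ (H - 1/2) * (v + n - 1 - x) ^ (H - 3/2))
    ((measurable_id.pow_const _).aestronglyMeasurable.mul
      (stronglyMeasurable_intervalIntegral_of_measurable_uncurry (by fun_prop)
        zero_le_one).aestronglyMeasurable)
    (fun x hx => by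
      refine le_of_eq_of_le ?_ (mul_le_mul_of_nonneg_left (hinner x hx).1 (hweight x hx))
      ring)
    (fun x hx => by
      refine le_of_le_of_eq (mul_le_mul_of_nonneg_left (hinner x hx).2 (hweight x hx)) ?_
      ring)
  simp only [intervalIntegral.integral_const_mul] at hbounds
  have hK := mul_nonneg hσ (CH_nonneg hH₀.le)
  have hlo := mul_le_mul_of_nonneg_left hbounds.1 hK
  have hhi := mul_le_mul_of_nonneg_left hbounds.2 hK
  rw [← mul_assoc, mul_CH_mul_div hp.ne'] at hlo hhi
  exact ⟨hlo, hhi⟩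

theorem one_add_one_div_sub_one_rpow {m : ℝ} (hm : 1 < m) (p : ℝ) :
    (1 + 1 / (m - 1)) ^ p = (m - 1) ^ (-p) * m ^ p := by
  have hm1 : 0 < m - 1 := by linarith
  rw [one_add_div hm1.ne', sub_add_cancel, Real.div_rpow (by linarith) hm1.le,
    Real.rpow_neg hm1.le, div_eq_inv_mul]

theorem gnH_mem_Icc {σ : ℝ} (hσ : 0 ≤ σ) (hH : 1/2 < H) {n : ℕ} (hn : 1 < n) :
    gnH σ H n ∈ Icc (gH σ H) (gH σ H * (1 + 1 / ((n : ℝ) - 1)) ^ (H - 1/2)) := by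
  have hp : 0 < H - 1/2 := by linarith
  have hnR : (1:ℝ) < n := by exact_mod_cast hn
  have hInt : IntervalIntegrable (fun x => ((n:ℝ) - x) ^ (H - 1/2)) volume (n - 1) n :=
    ((continuous_const.sub continuous_id).rpow_const fun _ => Or.inr hp.le).intervalIntegrable _ _
  have hInt_val : ∫ x in ((n:ℝ) - 1)..n, ((n:ℝ) - x) ^ (H - 1/2) = 1 / (H + 1/2) := by
    rw [intervalIntegral.integral_comp_sub_left (fun y => y ^ (H - 1/2)), sub_self,
      sub_sub_cancel, integral_rpow (Or.inl (by linarith)), show H - 1/2 + 1 = H + 1/2 by ring,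
      Real.one_rpow, Real.zero_rpow (by linarith)]
    ring
  have hinner : ∀ x ∈ Icc ((n:ℝ) - 1) n,
      ∫ y in (0:ℝ)..1, (y * ((n:ℝ) - x) + x) ^ (H - 1/2) * y ^ (H - 3/2) ∈
        Icc (x ^ (H - 1/2) / (H - 1/2)) ((n:ℝ) ^ (H - 1/2) / (H - 1/2)) :=
    fun x hx => integral_affine_rpow_mul_rpow_mem_Icc hH (by linarith [hx.1]) hx.2
  have hweight : ∀ x ∈ Icc ((n:ℝ) - 1) n, 0 ≤ x ^ (1/2 - H) * ((n:ℝ) - x) ^ (H - 1/2) :=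
    fun x hx => mul_nonneg (Real.rpow_nonneg (by linarith [hx.1]) _)
      (Real.rpow_nonneg (by linarith [hx.2]) _)
  have hbounds := intervalIntegral.integral_mem_Icc_of_le_of_le (by linarith)
    (hInt.const_mul (1 / (H - 1/2)))
    (hInt.const_mul (((n:ℝ) - 1) ^ (-(H - 1/2)) * (n:ℝ) ^ (H - 1/2) / (H - 1/2)))
    (g := fun x => x ^ (1/2 - H) * ((n:ℝ) - x) ^ (H - 1/2) *
      ∫ y in (0:ℝ)..1, (y * ((n:ℝ) - x) + x) ^ (H - 1/2) * y ^ (H - 3/2))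
    (((measurable_id.pow_const _).mul (by fun_prop)).aestronglyMeasurable.mul
      (stronglyMeasurable_intervalIntegral_of_measurable_uncurry (by fun_prop)
        zero_le_one).aestronglyMeasurable)
    (fun x hx => by
      have hx0 : 0 < x := by linarith [hx.1]
      have hcancel : x ^ (1/2 - H) * x ^ (H - 1/2) = 1 := by
        rw [← Real.rpow_add hx0]; norm_num
      refine le_of_eq_of_le ?_ (mul_le_mul_of_nonneg_left (hinner x hx).1 (hweight x hx))
      linear_combination (-((n:ℝ) - x) ^ (H - 1/2) / (H - 1/2)) * hcancel)
    (fun x hx => by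
      have hx_le : x ^ (1/2 - H) ≤ ((n:ℝ) - 1) ^ (-(H - 1/2)) := by
        rw [neg_sub]; exact Real.rpow_le_rpow_of_nonpos (by linarith) hx.1 (by linarith)
      have hB0 : 0 ≤ ∫ y in (0:ℝ)..1, (y * ((n:ℝ) - x) + x) ^ (H - 1/2) * y ^ (H - 3/2) :=
        le_trans (div_nonneg (Real.rpow_nonneg (by linarith [hx.1]) _) hp.le) (hinner x hx).1
      refine le_of_le_of_eq (mul_le_mul (mul_le_mul_of_nonneg_right hx_le
        (Real.rpow_nonneg (by linarith [hx.2]) _)) (hinner x hx).2 hB0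
        (mul_nonneg (Real.rpow_nonneg (by linarith) _) (Real.rpow_nonneg (by linarith [hx.2]) _)))
        ?_
      ring)
  simp only [intervalIntegral.integral_const_mul, hInt_val] at hbounds
  have hK := mul_nonneg hσ (CH_nonneg hH.le)
  have hlo := mul_le_mul_of_nonneg_left hbounds.1 hK
  have hhi := mul_le_mul_of_nonneg_left hbounds.2 hK
  rw [← mul_assoc, mul_CH_mul_div hp.ne'] at hlo hhi
  rw [one_add_one_div_sub_one_rpow hnR]
  exact ⟨le_of_eq_of_le (by rw [gH]; ring) hlo, le_of_le_of_eq hhi (by rw [gH]; ring)⟩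

end HurstKernel

/-- Lemma 4.2: bounds for `j_n^H(i)` in terms of `I_n(i)`, and bounds for `g_n^H`. -/
theorem statement1 (H σ : ℝ) (hH : H ∈ Set.Ioo (1 / 2 : ℝ) 1) (hσ : 0 < σ) :
    (∀ n i : ℕ, 1 ≤ i → i ≤ n - 1 →
      σ * cH H * ((n : ℝ) - 1) ^ (H - 1 / 2) * InH H n i ≤ jH σ H n i ∧
      jH σ H n i ≤ σ * cH H * (n : ℝ) ^ (H - 1 / 2) * InH H n i) ∧
    (∀ n : ℕ, 1 < n →
      gH σ H ≤ gnH σ H n ∧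
      gnH σ H n ≤ gH σ H * (1 + 1 / ((n : ℝ) - 1)) ^ (H - 1 / 2)) :=
  ⟨fun _ _ hi hin => jH_mem_Icc hσ.le hH.1 (by linarith [hH.2]) hi hin,
    fun _ hn => gnH_mem_Icc hσ.le hH.1 hn⟩

end
end

section
/- The probability P(|𝒴_H| > g_H) tends to 0 as H → 1/2 from above. -/
open MeasureTheory Filter Set ProbabilityTheory

noncomputable section

open scoped Topology

/-!
By Chebyshev's inequality, `P(|𝒴_H| > g_H) ≤ E[𝒴_H²] / g_H²`, and by Fatou's lemma and the
orthonormality of the `ξ_k`, `E[𝒴_H²] ≤ 4 g_H² Σ_k ρ_h(k)²`; so the probability is at most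
`4 Σ_k ρ_h(k)²`. As `h → 1/2` every `ρ_h(k)` tends to `ρ_{1/2}(k) = 0`, and the mean value theorem
gives `|ρ_h(k)| ≤ k^{-3/4}` uniformly for `h ≤ 5/8`, so the series tends to `0` by dominated
convergence.
-/

lemma gH_pos {σ H : ℝ} (hσ : 0 < σ) (h0 : 0 < H) (h1 : H < 1) : 0 < gH σ H := by
  have hc : 0 < cH H := Real.sqrt_pos.2 <| by
    have := Real.Gamma_pos_of_pos (show 0 < 3 / 2 - H by linarith)
    have := Real.Gamma_pos_of_pos (show 0 < H + 1 / 2 by linarith)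
    have := Real.Gamma_pos_of_pos (show 0 < 2 - 2 * H by linarith)
    positivity
  unfold gH
  positivity

lemma exists_rpow_sub_rpow_eq (q : ℝ) {a b : ℝ} (ha : 0 < a) (hab : a < b) :
    ∃ c ∈ Ioo a b, b ^ q - a ^ q = q * c ^ (q - 1) * (b - a) := by
  obtain ⟨c, hc, hslope⟩ := exists_hasDerivAt_eq_slope (fun x : ℝ => x ^ q)
    (fun x => q * x ^ (q - 1)) hab
    (fun x hx =>
      (Real.continuousAt_rpow_const x q (Or.inl (ha.trans_le hx.1).ne')).continuousWithinAt)
    (fun x hx => Real.hasDerivAt_rpow_const (Or.inl (ha.trans hx.1).ne'))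
  refine ⟨c, hc, ?_⟩
  rw [hslope, div_mul_cancel₀ _ (sub_ne_zero.2 hab.ne')]

lemma rpow_second_diff_mem {p a : ℝ} (hp1 : 1 ≤ p) (hp2 : p ≤ 2) (ha : 1 < a) :
    0 ≤ (a + 1) ^ p + (a - 1) ^ p - 2 * a ^ p ∧
      (a + 1) ^ p + (a - 1) ^ p - 2 * a ^ p ≤ 2 * p * (p - 1) * (a - 1) ^ (p - 2) := by
  have ha1 : 0 < a - 1 := by linarith
  obtain ⟨c₁, ⟨hac₁, hc₁a⟩, h₁⟩ := exists_rpow_sub_rpow_eq p (by linarith) (lt_add_one a)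
  obtain ⟨c₂, ⟨hac₂, hc₂a⟩, h₂⟩ := exists_rpow_sub_rpow_eq p ha1 (sub_one_lt a)
  obtain ⟨d, ⟨had, -⟩, h₃⟩ := exists_rpow_sub_rpow_eq (p - 1) ha1 (show a - 1 < a + 1 by linarith)
  have hdiff : (a + 1) ^ p + (a - 1) ^ p - 2 * a ^ p = p * (c₁ ^ (p - 1) - c₂ ^ (p - 1)) := by
    linear_combination h₁ - h₂
  have hc₂c₁ : c₂ ^ (p - 1) ≤ c₁ ^ (p - 1) :=
    Real.rpow_le_rpow (ha1.trans hac₂).le (by linarith) (by linarith)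
  have hc₁ : c₁ ^ (p - 1) ≤ (a + 1) ^ (p - 1) :=
    Real.rpow_le_rpow (by linarith) hc₁a.le (by linarith)
  have hc₂ : (a - 1) ^ (p - 1) ≤ c₂ ^ (p - 1) := Real.rpow_le_rpow ha1.le hac₂.le (by linarith)
  have hd : d ^ (p - 2) ≤ (a - 1) ^ (p - 2) := Real.rpow_le_rpow_of_nonpos ha1 had.le (by linarith)
  rw [hdiff]
  refine ⟨mul_nonneg (by linarith) (by linarith), ?_⟩
  calc p * (c₁ ^ (p - 1) - c₂ ^ (p - 1)) ≤ p * ((a + 1) ^ (p - 1) - (a - 1) ^ (p - 1)) := by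
        gcongr
    _ = 2 * (p * (p - 1)) * d ^ (p - 2) := by
        rw [h₃, show p - 1 - 1 = p - 2 by ring]; ring
    _ ≤ 2 * (p * (p - 1)) * (a - 1) ^ (p - 2) := by gcongr
    _ = 2 * p * (p - 1) * (a - 1) ^ (p - 2) := by ring

lemma abs_rho_le {h : ℝ} (h1 : 1 / 2 ≤ h) (h2 : h ≤ 5 / 8) {k : ℕ} (hk : 1 ≤ k) :
    |rho h k| ≤ (k : ℝ) ^ (-3 / 4 : ℝ) := by
  rcases hk.eq_or_lt with rfl | hk
  · have h0 : (0 : ℝ) ^ (2 * h) = 0 := Real.zero_rpow (by linarith)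
    have hlo : (2 : ℝ) ≤ 2 ^ (2 * h) := by
      simpa using Real.rpow_le_rpow_of_exponent_le one_le_two (show 1 ≤ 2 * h by linarith)
    have hhi : (2 : ℝ) ^ (2 * h) ≤ 4 := by
      simpa [show (2 : ℝ) ^ (2 : ℝ) = 4 by norm_num] using
        Real.rpow_le_rpow_of_exponent_le one_le_two (show 2 * h ≤ 2 by linarith)
    simp only [rho, Nat.cast_one, sub_self, h0, Real.one_rpow]
    rw [abs_le]; constructor <;> linarith
  · have hk2 : (2 : ℝ) ≤ k := by exact_mod_cast hk
    obtain ⟨hlo, hhi⟩ := rpow_second_diff_mem (a := k) (p := 2 * h) (by linarith) (by linarith)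
      (by linarith)
    have htwo : (1 / 2 : ℝ) ≤ 2 ^ (-3 / 4 : ℝ) := by
      simpa [Real.rpow_neg_one] using
        Real.rpow_le_rpow_of_exponent_le one_le_two (show (-1 : ℝ) ≤ -3 / 4 by norm_num)
    have hp : 2 * h * (2 * h - 1) ≤ 1 / 2 := by nlinarith
    rw [abs_of_nonneg (by unfold rho; linarith)]
    calc rho h k ≤ 2 * h * (2 * h - 1) * ((k : ℝ) - 1) ^ (2 * h - 2) := by unfold rho; linarith
      _ ≤ 1 / 2 * ((k : ℝ) - 1) ^ (-3 / 4 : ℝ) :=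
        mul_le_mul hp (Real.rpow_le_rpow_of_exponent_le (by linarith) (by linarith))
          (Real.rpow_nonneg (by linarith) _) (by norm_num)
      _ ≤ 1 / 2 * ((k : ℝ) / 2) ^ (-3 / 4 : ℝ) := by
        gcongr 1 / 2 * ?_
        exact Real.rpow_le_rpow_of_nonpos (by linarith) (by linarith) (by norm_num)
      _ = (k : ℝ) ^ (-3 / 4 : ℝ) * (1 / 2 / 2 ^ (-3 / 4 : ℝ)) := by
        rw [Real.div_rpow (by linarith) zero_le_two]; ring
      _ ≤ (k : ℝ) ^ (-3 / 4 : ℝ) := by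
        refine mul_le_of_le_one_right (by positivity) ?_
        rw [div_le_one (by positivity)]; exact htwo

lemma rho_one_half (k : ℕ) : rho (1 / 2) k = 0 := by
  simp only [rho, show (2 : ℝ) * (1 / 2) = 1 by norm_num, Real.rpow_one]
  ring

lemma continuousAt_rho_one_half (k : ℕ) : ContinuousAt (fun h => rho h k) (1 / 2) := by
  have hpow (x : ℝ) : ContinuousAt (fun h : ℝ => x ^ (2 * h)) (1 / 2) :=
    (Real.continuousAt_const_rpow' (by norm_num)).comp (continuousAt_const.mul continuousAt_id)
  unfold rho
  exact (((hpow _).add (hpow _)).sub (continuousAt_const.mul (hpow _))).div_const 2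

lemma rho_succ_sq_le {h : ℝ} (h1 : 1 / 2 ≤ h) (h2 : h ≤ 5 / 8) (k : ℕ) :
    rho h (k + 1) ^ 2 ≤ ((k + 1 : ℕ) : ℝ) ^ (-3 / 2 : ℝ) :=
  calc rho h (k + 1) ^ 2 = |rho h (k + 1)| ^ 2 := (sq_abs _).symm
    _ ≤ (((k + 1 : ℕ) : ℝ) ^ (-3 / 4 : ℝ)) ^ 2 := by
      gcongr; exact abs_rho_le h1 h2 (Nat.le_add_left 1 k)
    _ = ((k + 1 : ℕ) : ℝ) ^ (-3 / 2 : ℝ) := by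
      rw [← Real.rpow_natCast, ← Real.rpow_mul (Nat.cast_nonneg _)]; norm_num

lemma summable_nat_succ_rpow_neg_three_halves :
    Summable fun k : ℕ => ((k + 1 : ℕ) : ℝ) ^ (-3 / 2 : ℝ) :=
  (summable_nat_add_iff 1).2 (Real.summable_nat_rpow.2 (by norm_num))

lemma summable_rho_sq {h : ℝ} (h1 : 1 / 2 ≤ h) (h2 : h ≤ 5 / 8) :
    Summable fun k : ℕ => rho h (k + 1) ^ 2 :=
  summable_nat_succ_rpow_neg_three_halves.of_nonneg_of_le (fun _ => sq_nonneg _)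
    (rho_succ_sq_le h1 h2)

lemma tendsto_tsum_rho_sq :
    Tendsto (fun h => ∑' k : ℕ, rho h (k + 1) ^ 2) (𝓝[>] (1 / 2)) (𝓝 0) := by
  have hlim (k : ℕ) : Tendsto (fun h => rho h (k + 1) ^ 2) (𝓝[>] (1 / 2)) (𝓝 0) := by
    have h0 := (continuousAt_rho_one_half (k + 1)).tendsto
    simp only [rho_one_half] at h0
    simpa using (h0.mono_left nhdsWithin_le_nhds).pow 2
  have hbound : ∀ᶠ h in 𝓝[>] (1 / 2 : ℝ), ∀ k : ℕ,
      ‖rho h (k + 1) ^ 2‖ ≤ ((k + 1 : ℕ) : ℝ) ^ (-3 / 2 : ℝ) := by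
    filter_upwards [Ioc_mem_nhdsGT (show (1 / 2 : ℝ) < 5 / 8 by norm_num)] with h ⟨h1, h2⟩ k
    rw [Real.norm_of_nonneg (sq_nonneg _)]
    exact rho_succ_sq_le h1.le h2 k
  simpa using
    tendsto_tsum_of_dominated_convergence summable_nat_succ_rpow_neg_three_halves hlim hbound

section Rademacher

variable {Ω : Type*} [MeasurableSpace Ω] {P : Measure Ω} [IsProbabilityMeasure P]

lemma ae_eq_one_or_eq_neg_one {X : Ω → ℝ} (hX : Measurable X)
    (hdist : P {ω | X ω = 1} = 1 / 2 ∧ P {ω | X ω = -1} = 1 / 2) :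
    ∀ᵐ ω ∂P, X ω = 1 ∨ X ω = -1 := by
  have hdisj : Disjoint {ω | X ω = 1} {ω | X ω = -1} :=
    disjoint_left.2 fun ω (h1 : X ω = 1) (h2 : X ω = -1) => by norm_num [h1] at h2
  have hunion : P ({ω | X ω = 1} ∪ {ω | X ω = -1}) = 1 := by
    rw [measure_union hdisj (hX (measurableSet_singleton _)), hdist.1, hdist.2, ENNReal.add_halves]
  exact measure_mono_null (fun ω hω => hω) (prob_compl_eq_zero_iff
    ((hX (measurableSet_singleton _)).union (hX (measurableSet_singleton _))) |>.2 hunion)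

lemma integral_eq_zero_of_measure_eq_half {X : Ω → ℝ} (hX : Measurable X)
    (hdist : P {ω | X ω = 1} = 1 / 2 ∧ P {ω | X ω = -1} = 1 / 2) : ∫ ω, X ω ∂P = 0 := by
  have hA : MeasurableSet {ω | X ω = 1} := hX (measurableSet_singleton 1)
  have hB : MeasurableSet {ω | X ω = -1} := hX (measurableSet_singleton (-1))
  have hX_eq : X =ᵐ[P] fun ω => {ω | X ω = 1}.indicator 1 ω - {ω | X ω = -1}.indicator 1 ω := by
    filter_upwards [ae_eq_one_or_eq_neg_one hX hdist] with ω hω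
    rcases hω with h | h <;> norm_num [indicator_apply, h]
  rw [integral_congr_ae hX_eq, integral_sub ((integrable_const 1).indicator hA)
    ((integrable_const 1).indicator hB), integral_indicator_one hA, integral_indicator_one hB,
    measureReal_def, measureReal_def, hdist.1, hdist.2, sub_self]

variable {ξ : ℕ → Ω → ℝ}

lemma integrable_mul_of_measure_eq_half (hξmeas : ∀ i, Measurable (ξ i))
    (hξdist : ∀ i, P {ω | ξ i ω = 1} = 1 / 2 ∧ P {ω | ξ i ω = -1} = 1 / 2) (i j : ℕ) :
    Integrable (fun ω => ξ i ω * ξ j ω) P := by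
  refine .of_bound ((hξmeas i).mul (hξmeas j)).aestronglyMeasurable 1 ?_
  filter_upwards [ae_eq_one_or_eq_neg_one (hξmeas i) (hξdist i),
    ae_eq_one_or_eq_neg_one (hξmeas j) (hξdist j)] with ω hi hj
  rcases hi with hi | hi <;> rcases hj with hj | hj <;> simp [hi, hj]

lemma integral_mul_eq_ite_of_iIndepFun (hξmeas : ∀ i, Measurable (ξ i))
    (hξdist : ∀ i, P {ω | ξ i ω = 1} = 1 / 2 ∧ P {ω | ξ i ω = -1} = 1 / 2)
    (hξindep : iIndepFun ξ P) (i j : ℕ) :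
    ∫ ω, ξ i ω * ξ j ω ∂P = if i = j then 1 else 0 := by
  split_ifs with hij
  · subst hij
    have hsq : (fun ω => ξ i ω * ξ i ω) =ᵐ[P] fun _ => 1 := by
      filter_upwards [ae_eq_one_or_eq_neg_one (hξmeas i) (hξdist i)] with ω h
      rcases h with h | h <;> simp [h]
    simp [integral_congr_ae hsq]
  · rw [(hξindep.indepFun hij).integral_fun_mul_eq_mul_integral (hξmeas i).aestronglyMeasurable
      (hξmeas j).aestronglyMeasurable, integral_eq_zero_of_measure_eq_half (hξmeas i) (hξdist i),
      zero_mul]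

end Rademacher

section Orthonormal

variable {Ω : Type*} {ξ : ℕ → Ω → ℝ}

lemma sq_sum_mul_eq (a : ℕ → ℝ) (n : ℕ) (ω : Ω) :
    (∑ k ∈ Finset.range n, a k * ξ k ω) ^ 2 =
      ∑ i ∈ Finset.range n, ∑ j ∈ Finset.range n, a i * a j * (ξ i ω * ξ j ω) := by
  rw [sq, Finset.sum_mul_sum]
  exact Finset.sum_congr rfl fun i _ => Finset.sum_congr rfl fun j _ => by ring

variable [MeasurableSpace Ω] {P : Measure Ω}

lemma integrable_sq_sum_mul (hint : ∀ i j, Integrable (fun ω => ξ i ω * ξ j ω) P)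
    (a : ℕ → ℝ) (n : ℕ) : Integrable (fun ω => (∑ k ∈ Finset.range n, a k * ξ k ω) ^ 2) P := by
  simp_rw [sq_sum_mul_eq]
  exact integrable_finsetSum _ fun i _ =>
    integrable_finsetSum _ fun j _ => (hint i j).const_mul _

lemma integral_sq_sum_mul (hint : ∀ i j, Integrable (fun ω => ξ i ω * ξ j ω) P)
    (horth : ∀ i j, ∫ ω, ξ i ω * ξ j ω ∂P = if i = j then 1 else 0) (a : ℕ → ℝ) (n : ℕ) :
    ∫ ω, (∑ k ∈ Finset.range n, a k * ξ k ω) ^ 2 ∂P = ∑ k ∈ Finset.range n, a k ^ 2 := by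
  simp_rw [sq_sum_mul_eq]
  rw [integral_finsetSum _ fun i _ => integrable_finsetSum _ fun j _ => (hint i j).const_mul _]
  refine Finset.sum_congr rfl fun i hi => ?_
  rw [integral_finsetSum _ fun j _ => (hint i j).const_mul _]
  simp_rw [integral_const_mul, horth, mul_ite, mul_one, mul_zero]
  rw [Finset.sum_ite_eq, if_pos hi, sq]

lemma lintegral_sq_le_of_tendsto_sum (hint : ∀ i j, Integrable (fun ω => ξ i ω * ξ j ω) P)
    (horth : ∀ i j, ∫ ω, ξ i ω * ξ j ω ∂P = if i = j then 1 else 0) {a : ℕ → ℝ}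
    (ha : Summable fun k => a k ^ 2) {Y : Ω → ℝ}
    (hlim : ∀ᵐ ω ∂P, Tendsto (fun n => ∑ k ∈ Finset.range n, a k * ξ k ω) atTop (𝓝 (Y ω))) :
    ∫⁻ ω, ENNReal.ofReal (Y ω ^ 2) ∂P ≤ ENNReal.ofReal (∑' k, a k ^ 2) := by
  calc ∫⁻ ω, ENNReal.ofReal (Y ω ^ 2) ∂P
      = ∫⁻ ω, liminf (fun n => ENNReal.ofReal ((∑ k ∈ Finset.range n, a k * ξ k ω) ^ 2)) atTop ∂P :=
        lintegral_congr_ae <| by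
          filter_upwards [hlim] with ω hω
          exact (((ENNReal.continuous_ofReal.tendsto _).comp (hω.pow 2)).liminf_eq).symm
    _ ≤ liminf (fun n => ∫⁻ ω, ENNReal.ofReal ((∑ k ∈ Finset.range n, a k * ξ k ω) ^ 2) ∂P)
        atTop :=
        lintegral_liminf_le' fun n => (integrable_sq_sum_mul hint a n).aemeasurable.ennreal_ofReal
    _ ≤ ENNReal.ofReal (∑' k, a k ^ 2) := by
        refine liminf_le_of_frequently_le' (Frequently.of_forall fun n => ?_)
        rw [← ofReal_integral_eq_lintegral_ofReal (integrable_sq_sum_mul hint a n)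
          (ae_of_all _ fun ω => sq_nonneg _), integral_sq_sum_mul hint horth]
        exact ENNReal.ofReal_le_ofReal (ha.sum_le_tsum _ fun k _ => sq_nonneg (a k))

lemma measureReal_lt_abs_le_of_tendsto_sum (hint : ∀ i j, Integrable (fun ω => ξ i ω * ξ j ω) P)
    (horth : ∀ i j, ∫ ω, ξ i ω * ξ j ω ∂P = if i = j then 1 else 0) {a : ℕ → ℝ}
    (ha : Summable fun k => a k ^ 2) {Y : Ω → ℝ} (hY : AEMeasurable Y P)
    (hlim : ∀ᵐ ω ∂P, Tendsto (fun n => ∑ k ∈ Finset.range n, a k * ξ k ω) atTop (𝓝 (Y ω)))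
    {c : ℝ} (hc : 0 < c) :
    P.real {ω | c < |Y ω|} ≤ (∑' k, a k ^ 2) / c ^ 2 := by
  have hsub : {ω | c < |Y ω|} ⊆ {ω | ENNReal.ofReal (c ^ 2) ≤ ENNReal.ofReal (Y ω ^ 2)} :=
    fun ω (hω : c < |Y ω|) => ENNReal.ofReal_le_ofReal <| by
      rw [← sq_abs (Y ω)]; exact pow_le_pow_left₀ hc.le hω.le 2
  refine ENNReal.toReal_le_of_le_ofReal (div_nonneg (tsum_nonneg fun k => sq_nonneg _)
    (sq_nonneg c)) ?_
  calc P {ω | c < |Y ω|}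
      ≤ P {ω | ENNReal.ofReal (c ^ 2) ≤ ENNReal.ofReal (Y ω ^ 2)} := measure_mono hsub
    _ ≤ (∫⁻ ω, ENNReal.ofReal (Y ω ^ 2) ∂P) / ENNReal.ofReal (c ^ 2) :=
        meas_ge_le_lintegral_div (hY.pow_const 2).ennreal_ofReal
          (ENNReal.ofReal_pos.2 (by positivity)).ne' ENNReal.ofReal_ne_top
    _ ≤ ENNReal.ofReal (∑' k, a k ^ 2) / ENNReal.ofReal (c ^ 2) := by
        gcongr; exact lintegral_sq_le_of_tendsto_sum hint horth ha hlim
    _ = ENNReal.ofReal ((∑' k, a k ^ 2) / c ^ 2) := (ENNReal.ofReal_div_of_pos (by positivity)).symm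

end Orthonormal

/-- `ξ k` plays the role of the paper's `ξ_{k+1}`. -/
theorem statement5 {Ω : Type} [MeasurableSpace Ω] (P : Measure Ω) [IsProbabilityMeasure P]
    (σ : ℝ) (hσ : 0 < σ)
    (ξ : ℕ → Ω → ℝ) (hξmeas : ∀ i, Measurable (ξ i))
    (hξindep : iIndepFun ξ P)
    (hξdist : ∀ i, P {ω | ξ i ω = 1} = 1 / 2 ∧ P {ω | ξ i ω = -1} = 1 / 2)
    (Y : ℝ → Ω → ℝ) (hYmeas : ∀ H, Measurable (Y H))
    (hY : ∀ H ∈ Set.Ioo (1 / 2 : ℝ) 1, ∀ᵐ ω ∂P, Tendsto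
      (fun n => ∑ k ∈ Finset.range n, 2 * gH σ H * rho (H / 2 + 1 / 4) (k + 1) * ξ k ω)
      atTop (nhds (Y H ω))) :
    Tendsto (fun H => (P {ω | gH σ H < |Y H ω|}).toReal)
      (nhdsWithin (1 / 2) (Set.Ioo (1 / 2 : ℝ) 1)) (nhds 0) := by
  have hint := integrable_mul_of_measure_eq_half hξmeas hξdist
  have horth := integral_mul_eq_ite_of_iIndepFun hξmeas hξdist hξindep
  have hh_tendsto :
      Tendsto (fun H : ℝ => H / 2 + 1 / 4) (𝓝[Ioo (1 / 2) 1] (1 / 2)) (𝓝[>] (1 / 2)) := by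
    refine tendsto_nhdsWithin_iff.2 ⟨?_, ?_⟩
    · exact (((continuous_id.div_const 2).add continuous_const).tendsto' _ _
        (by norm_num)).mono_left nhdsWithin_le_nhds
    · filter_upwards [self_mem_nhdsWithin] with H hH
      exact show 1 / 2 < H / 2 + 1 / 4 by linarith [hH.1]
  have hmarkov : ∀ᶠ H in 𝓝[Ioo (1 / 2) 1] (1 / 2),
      (P {ω | gH σ H < |Y H ω|}).toReal ≤ 4 * ∑' k : ℕ, rho (H / 2 + 1 / 4) (k + 1) ^ 2 := by
    filter_upwards [self_mem_nhdsWithin,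
      hh_tendsto.eventually (Ioc_mem_nhdsGT (show (1 / 2 : ℝ) < 5 / 8 by norm_num))] with H hH hh
    have hg := gH_pos hσ (by linarith [hH.1]) hH.2
    have ha : Summable fun k => (2 * gH σ H * rho (H / 2 + 1 / 4) (k + 1)) ^ 2 := by
      simp_rw [mul_pow]; exact (summable_rho_sq hh.1.le hh.2).mul_left _
    calc (P {ω | gH σ H < |Y H ω|}).toReal
        ≤ (∑' k, (2 * gH σ H * rho (H / 2 + 1 / 4) (k + 1)) ^ 2) / gH σ H ^ 2 :=
          measureReal_lt_abs_le_of_tendsto_sum hint horth ha (hYmeas H).aemeasurable (hY H hH) hg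
      _ = 4 * ∑' k : ℕ, rho (H / 2 + 1 / 4) (k + 1) ^ 2 := by
          simp_rw [mul_pow]; rw [tsum_mul_left]; field_simp; ring
  have hlim := (tendsto_tsum_rho_sq.comp hh_tendsto).const_mul 4
  rw [mul_zero] at hlim
  exact tendsto_of_tendsto_of_tendsto_of_le_of_le' tendsto_const_nhds hlim
    (Eventually.of_forall fun H => ENNReal.toReal_nonneg) hmarkov

end
end

section
/- For each integer n > 1 there exists a unique x_n ∈ (0,n−1) such that the function g_n(x) = x^{1/2−H}·((n−x)^{H−1/2} − (n−1−x)^{H−1/2}) is strictly decreasing on (0,x_n) and strictly increasing on (x_n,n−1). Moreover, x_n/(n−1) → H − 1/2 as n → ∞. -/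
open MeasureTheory Filter Set ProbabilityTheory

noncomputable section

/-!
With `a = n - 1 - x`, one has `g_n'(x) = (H - 1/2) x^{-1/2-H} ψ_n(x)` where
`ψ_n(x) = x (a^{H-3/2} - (a+1)^{H-3/2}) - ((a+1)^{H-1/2} - a^{H-1/2})`.
The function `ψ_n` is strictly increasing on `[0, n-1)`, negative at `0` and tends to `+∞` at
`n - 1`, so its unique zero `x_n` is the unique turning point of `g_n`.
Bounding both increments by the mean value theorem, the sign of `ψ_n((n-1) t)` is, for large `n`,
that of a quadratic in `n - 1` with leading coefficient `(1 - t)(t - (H - 1/2))`; hence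
`x_n / (n-1)` ends up on the same side of every `t ≠ H - 1/2` as `H - 1/2`.
-/

open Topology

lemma exists_rpow_add_one_sub_rpow_eq_mul {a : ℝ} (ha : 0 < a) {q : ℝ} (hq : q ≤ 1) :
    ∃ c ∈ Icc ((a + 1) ^ (q - 1)) (a ^ (q - 1)), (a + 1) ^ q - a ^ q = q * c := by
  have hderiv : ∀ x ∈ Ioo a (a + 1), HasDerivAt (fun x : ℝ => x ^ q) (q * x ^ (q - 1)) x :=
    fun x hx => Real.hasDerivAt_rpow_const (Or.inl (ha.trans hx.1).ne')
  have hcont : ContinuousOn (fun x : ℝ => x ^ q) (Icc a (a + 1)) :=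
    fun x hx =>
      (Real.continuousAt_rpow_const x q (Or.inl (ha.trans_le hx.1).ne')).continuousWithinAt
  obtain ⟨c, hc, hslope⟩ := exists_hasDerivAt_eq_slope _ _ (lt_add_one a) hcont hderiv
  refine ⟨c ^ (q - 1), ⟨?_, ?_⟩, by rw [hslope]; ring⟩
  · exact Real.rpow_le_rpow_of_nonpos (ha.trans hc.1) hc.2.le (by linarith)
  · exact Real.rpow_le_rpow_of_nonpos ha hc.1.le (by linarith)

lemma rpow_add_one_sub_rpow_lt_mul_rpow_sub_rpow {p a x : ℝ} (hp : 0 < p) (hp1 : p < 1)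
    (ha : 0 < a) (hx : 0 ≤ x) (h : p * (a + 1) ^ 2 < (1 - p) * x * a) :
    (a + 1) ^ p - a ^ p < x * (a ^ (p - 1) - (a + 1) ^ (p - 1)) := by
  obtain ⟨c, ⟨-, hc⟩, hc_eq⟩ := exists_rpow_add_one_sub_rpow_eq_mul ha hp1.le
  obtain ⟨d, ⟨hd, -⟩, hd_eq⟩ := exists_rpow_add_one_sub_rpow_eq_mul ha (q := p - 1) (by linarith)
  have hc' : c ≤ (a + 1) ^ p / a := by
    rw [Real.rpow_sub_one ha.ne'] at hc
    exact hc.trans (div_le_div_of_nonneg_right (Real.rpow_le_rpow ha.le (by linarith) hp.le) ha.le)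
  rw [Real.rpow_sub_one (by positivity), Real.rpow_sub_one (by positivity), div_div, ← sq] at hd
  have key : p * ((a + 1) ^ p / a) < x * (1 - p) * ((a + 1) ^ p / (a + 1) ^ 2) := by
    rw [mul_div_assoc', mul_div_assoc', div_lt_div_iff₀ ha (by positivity)]
    have := mul_lt_mul_of_pos_left h (by positivity : (0 : ℝ) < (a + 1) ^ p)
    linarith
  calc (a + 1) ^ p - a ^ p = p * c := hc_eq
    _ ≤ p * ((a + 1) ^ p / a) := by gcongr
    _ < x * (1 - p) * ((a + 1) ^ p / (a + 1) ^ 2) := key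
    _ ≤ x * (1 - p) * d := by gcongr
    _ = x * (a ^ (p - 1) - (a + 1) ^ (p - 1)) := by linear_combination x * hd_eq

lemma mul_rpow_sub_rpow_lt_rpow_add_one_sub_rpow {p a x : ℝ} (hp : 0 < p) (hp1 : p < 1)
    (ha : 0 < a) (hx : 0 ≤ x) (h : (1 - p) * x * (a + 1) < p * a ^ 2) :
    x * (a ^ (p - 1) - (a + 1) ^ (p - 1)) < (a + 1) ^ p - a ^ p := by
  obtain ⟨c, ⟨hc, -⟩, hc_eq⟩ := exists_rpow_add_one_sub_rpow_eq_mul ha hp1.le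
  obtain ⟨d, ⟨-, hd⟩, hd_eq⟩ := exists_rpow_add_one_sub_rpow_eq_mul ha (q := p - 1) (by linarith)
  have hc' : a ^ p / (a + 1) ≤ c := by
    rw [Real.rpow_sub_one (by positivity)] at hc
    exact (div_le_div_of_nonneg_right (Real.rpow_le_rpow ha.le (by linarith) hp.le)
      (by positivity)).trans hc
  rw [Real.rpow_sub_one ha.ne', Real.rpow_sub_one ha.ne', div_div, ← sq] at hd
  have key : x * (1 - p) * (a ^ p / a ^ 2) < p * (a ^ p / (a + 1)) := by
    rw [mul_div_assoc', mul_div_assoc', div_lt_div_iff₀ (by positivity) (by positivity)]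
    have := mul_lt_mul_of_pos_left h (by positivity : (0 : ℝ) < a ^ p)
    linarith
  calc x * (a ^ (p - 1) - (a + 1) ^ (p - 1)) = x * (1 - p) * d := by
        linear_combination -x * hd_eq
    _ ≤ x * (1 - p) * (a ^ p / a ^ 2) := by gcongr
    _ < p * (a ^ p / (a + 1)) := key
    _ ≤ p * c := by gcongr
    _ = (a + 1) ^ p - a ^ p := hc_eq.symm

def psiH (H : ℝ) (n : ℕ) (x : ℝ) : ℝ :=
  x * (((n : ℝ) - 1 - x) ^ (H - 1 / 2 - 1) - ((n : ℝ) - x) ^ (H - 1 / 2 - 1)) - phiH H n x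

lemma psiH_eq {H : ℝ} {n : ℕ} {x a : ℝ} (ha : (n : ℝ) - 1 - x = a) :
    psiH H n x = x * (a ^ (H - 1 / 2 - 1) - (a + 1) ^ (H - 1 / 2 - 1))
      - ((a + 1) ^ (H - 1 / 2) - a ^ (H - 1 / 2)) := by
  rw [psiH, phiH, ha, show (n : ℝ) - x = a + 1 by linarith]

lemma hasDerivAt_const_sub_rpow {c x : ℝ} (p : ℝ) (hx : x < c) :
    HasDerivAt (fun y => (c - y) ^ p) (-(p * (c - x) ^ (p - 1))) x := by
  convert ((hasDerivAt_id' x).const_sub c).rpow_const (p := p) (Or.inl (sub_ne_zero.2 hx.ne'))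
    using 1
  ring

lemma hasDerivAt_phiH (H : ℝ) {n : ℕ} {x : ℝ} (hx : x < (n : ℝ) - 1) :
    HasDerivAt (phiH H n)
      ((H - 1 / 2) * (((n : ℝ) - 1 - x) ^ (H - 1 / 2 - 1) - ((n : ℝ) - x) ^ (H - 1 / 2 - 1)))
      x := by
  refine ((hasDerivAt_const_sub_rpow (H - 1 / 2) (by linarith : x < n)).sub
    (hasDerivAt_const_sub_rpow (H - 1 / 2) hx)).congr_deriv ?_
  ring

lemma hasDerivAt_gmap (H : ℝ) {n : ℕ} {x : ℝ} (hx : x ∈ Ioo 0 ((n : ℝ) - 1)) :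
    HasDerivAt (gmap H n) ((H - 1 / 2) * x ^ (1 / 2 - H - 1) * psiH H n x) x := by
  refine ((Real.hasDerivAt_rpow_const (p := 1 / 2 - H) (Or.inl hx.1.ne')).mul
    (hasDerivAt_phiH H hx.2)).congr_deriv ?_
  have hx0 : x ≠ 0 := hx.1.ne'
  rw [psiH, Real.rpow_sub_one hx0]
  field_simp
  ring

lemma hasDerivAt_psiH (H : ℝ) {n : ℕ} {x : ℝ} (hx : x < (n : ℝ) - 1) :
    HasDerivAt (psiH H n)
      ((3 / 2 - H) * ((((n : ℝ) - 1 - x) ^ (H - 1 / 2 - 1) - ((n : ℝ) - x) ^ (H - 1 / 2 - 1)) +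
        x * (((n : ℝ) - 1 - x) ^ (H - 1 / 2 - 1 - 1) - ((n : ℝ) - x) ^ (H - 1 / 2 - 1 - 1))))
      x := by
  refine (((hasDerivAt_id' x).mul ((hasDerivAt_const_sub_rpow (H - 1 / 2 - 1) hx).sub
    (hasDerivAt_const_sub_rpow (H - 1 / 2 - 1) (by linarith : x < n)))).sub
    (hasDerivAt_phiH H hx)).congr_deriv ?_
  simp only [Pi.sub_apply]
  ring

lemma strictMonoOn_psiH {H : ℝ} (hH : H < 3 / 2) (n : ℕ) :
    StrictMonoOn (psiH H n) (Ico 0 ((n : ℝ) - 1)) := by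
  refine strictMonoOn_of_hasDerivWithinAt_pos (convex_Ico _ _)
    (fun x hx => (hasDerivAt_psiH H hx.2).continuousAt.continuousWithinAt)
    (fun x hx => (hasDerivAt_psiH H (interior_subset hx).2).hasDerivWithinAt) fun x hx => ?_
  rw [interior_Ico] at hx
  have hgap : (n : ℝ) - 1 - x < n - x := by linarith
  have hpos : (0 : ℝ) < n - 1 - x := by linarith [hx.2]
  have h1 := Real.rpow_lt_rpow_of_neg hpos hgap (by linarith : H - 1 / 2 - 1 < 0)
  have h2 := Real.rpow_lt_rpow_of_neg hpos hgap (by linarith : H - 1 / 2 - 1 - 1 < 0)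
  have := mul_pos hx.1 (sub_pos.2 h2)
  exact mul_pos (by linarith) (by linarith)

lemma psiH_neg_iff {H : ℝ} (hH : H < 3 / 2) {n : ℕ} {r x : ℝ} (hr : r ∈ Ico 0 ((n : ℝ) - 1))
    (hr0 : psiH H n r = 0) (hx : x ∈ Ico 0 ((n : ℝ) - 1)) : psiH H n x < 0 ↔ x < r := by
  rw [← hr0]
  exact (strictMonoOn_psiH hH n).lt_iff_lt hx hr

lemma psiH_pos_iff {H : ℝ} (hH : H < 3 / 2) {n : ℕ} {r x : ℝ} (hr : r ∈ Ico 0 ((n : ℝ) - 1))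
    (hr0 : psiH H n r = 0) (hx : x ∈ Ico 0 ((n : ℝ) - 1)) : 0 < psiH H n x ↔ r < x := by
  rw [← hr0]
  exact (strictMonoOn_psiH hH n).lt_iff_lt hr hx

lemma psiH_zero_neg {H : ℝ} (hH : 1 / 2 < H) {n : ℕ} (hn : 1 ≤ n) : psiH H n 0 < 0 := by
  have hn' : (1 : ℝ) ≤ n := by exact_mod_cast hn
  simp only [psiH, phiH, zero_mul, sub_zero, zero_sub, neg_lt_zero, sub_pos]
  exact Real.rpow_lt_rpow (by linarith) (by linarith) (by linarith)

lemma tendsto_psiH_nhdsLT {H : ℝ} (hH : 1 / 2 < H) (hH' : H < 3 / 2) {n : ℕ} (hn : 1 < n) :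
    Tendsto (psiH H n) (𝓝[<] ((n : ℝ) - 1)) atTop := by
  have hm : (0 : ℝ) < n - 1 := sub_pos.2 (Nat.one_lt_cast.2 hn)
  have hgap : Tendsto (fun x => (n : ℝ) - 1 - x) (𝓝[<] ((n : ℝ) - 1)) (𝓝[>] 0) := by
    refine tendsto_nhdsWithin_iff.2 ⟨?_, eventually_nhdsWithin_of_forall fun x hx =>
      mem_Ioi.2 (sub_pos.2 hx)⟩
    exact ((continuous_sub_left _).tendsto' _ _ (sub_self _)).mono_left nhdsWithin_le_nhds
  have hblow : Tendsto (fun x => x * ((n : ℝ) - 1 - x) ^ (H - 1 / 2 - 1)) (𝓝[<] ((n : ℝ) - 1))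
      atTop :=
    (tendsto_nhdsWithin_of_tendsto_nhds tendsto_id).pos_mul_atTop hm
      ((tendsto_rpow_neg_nhdsGT_zero (by linarith)).comp hgap)
  have hrest : ContinuousAt (fun x => x * ((n : ℝ) - x) ^ (H - 1 / 2 - 1) + phiH H n x)
      ((n : ℝ) - 1) := by
    unfold phiH
    fun_prop (disch := first | (right; linarith) | (left; simp))
  exact (hblow.atTop_add (hrest.tendsto.neg.mono_left nhdsWithin_le_nhds)).congr fun x => by
    rw [psiH]; ring

lemma exists_psiH_eq_zero {H : ℝ} (hH : 1 / 2 < H) (hH' : H < 3 / 2) {n : ℕ} (hn : 1 < n) :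
    ∃ r ∈ Ioo 0 ((n : ℝ) - 1), psiH H n r = 0 := by
  have hm : (0 : ℝ) < n - 1 := sub_pos.2 (Nat.one_lt_cast.2 hn)
  obtain ⟨b, hb_pos, hb⟩ := (((tendsto_psiH_nhdsLT hH hH' hn).eventually_gt_atTop 0).and
    (Ioo_mem_nhdsLT hm)).exists
  have hcont : ContinuousOn (psiH H n) (Icc 0 b) := fun x hx =>
    (hasDerivAt_psiH H (hx.2.trans_lt hb.2)).continuousAt.continuousWithinAt
  obtain ⟨r, hr, hr0⟩ := intermediate_value_Ioo hb.1.le hcont ⟨psiH_zero_neg hH hn.le, hb_pos⟩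
  exact ⟨r, ⟨hr.1, hr.2.trans hb.2⟩, hr0⟩

def IsStrictValley (f : ℝ → ℝ) (a b x : ℝ) : Prop :=
  x ∈ Ioo a b ∧ StrictAntiOn f (Ioo a x) ∧ StrictMonoOn f (Ioo x b)

lemma IsStrictValley.le {f : ℝ → ℝ} {a b x y : ℝ} (hx : IsStrictValley f a b x)
    (hy : IsStrictValley f a b y) : x ≤ y := by
  by_contra! hyx
  obtain ⟨u, hyu, hux⟩ := exists_between hyx
  obtain ⟨v, huv, hvx⟩ := exists_between hux
  have hmono := hy.2.2 ⟨hyu, hux.trans hx.1.2⟩ ⟨hyu.trans huv, hvx.trans hx.1.2⟩ huv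
  have hanti := hx.2.1 ⟨hy.1.1.trans hyu, hux⟩ ⟨hy.1.1.trans (hyu.trans huv), hvx⟩ huv
  exact lt_asymm hmono hanti

lemma IsStrictValley.unique {f : ℝ → ℝ} {a b x y : ℝ} (hx : IsStrictValley f a b x)
    (hy : IsStrictValley f a b y) : x = y :=
  (hx.le hy).antisymm (hy.le hx)

lemma isStrictValley_of_hasDerivAt {f f' : ℝ → ℝ} {a b r : ℝ} (hr : r ∈ Ioo a b)
    (hf : ∀ x ∈ Ioo a b, HasDerivAt f (f' x) x) (hneg : ∀ x ∈ Ioo a r, f' x < 0)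
    (hpos : ∀ x ∈ Ioo r b, 0 < f' x) : IsStrictValley f a b r := by
  have hleft : Ioo a r ⊆ Ioo a b := Ioo_subset_Ioo_right hr.2.le
  have hright : Ioo r b ⊆ Ioo a b := Ioo_subset_Ioo_left hr.1.le
  refine ⟨hr, strictAntiOn_of_hasDerivWithinAt_neg (f' := f') (convex_Ioo a r) ?_ ?_ ?_,
    strictMonoOn_of_hasDerivWithinAt_pos (f' := f') (convex_Ioo r b) ?_ ?_ ?_⟩
  · exact fun x hx => (hf x (hleft hx)).continuousAt.continuousWithinAt
  · exact fun x hx => (hf x (hleft (interior_subset hx))).hasDerivWithinAt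
  · simpa only [interior_Ioo] using hneg
  · exact fun x hx => (hf x (hright hx)).continuousAt.continuousWithinAt
  · exact fun x hx => (hf x (hright (interior_subset hx))).hasDerivWithinAt
  · simpa only [interior_Ioo] using hpos

lemma isStrictValley_gmap {H : ℝ} (hH : 1 / 2 < H) (hH' : H < 3 / 2) {n : ℕ} {r : ℝ}
    (hr : r ∈ Ioo 0 ((n : ℝ) - 1)) (hr0 : psiH H n r = 0) :
    IsStrictValley (gmap H n) 0 ((n : ℝ) - 1) r := by
  have hr' : r ∈ Ico 0 ((n : ℝ) - 1) := Ioo_subset_Ico_self hr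
  have hfactor : ∀ x ∈ Ioo 0 ((n : ℝ) - 1), 0 < (H - 1 / 2) * x ^ (1 / 2 - H - 1) := fun x hx =>
    mul_pos (by linarith) (Real.rpow_pos_of_pos hx.1 _)
  refine isStrictValley_of_hasDerivAt hr (fun x hx => hasDerivAt_gmap H hx) (fun x hx => ?_)
    fun x hx => ?_
  · have hx' : x ∈ Ioo 0 ((n : ℝ) - 1) := ⟨hx.1, hx.2.trans hr.2⟩
    exact mul_neg_of_pos_of_neg (hfactor x hx')
      ((psiH_neg_iff hH' hr' hr0 (Ioo_subset_Ico_self hx')).2 hx.2)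
  · have hx' : x ∈ Ioo 0 ((n : ℝ) - 1) := ⟨hr.1.trans hx.1, hx.2⟩
    exact mul_pos (hfactor x hx') ((psiH_pos_iff hH' hr' hr0 (Ioo_subset_Ico_self hx')).2 hx.1)

lemma eventually_quadratic_pos {c : ℝ} (hc : 0 < c) (b d : ℝ) :
    ∀ᶠ m : ℝ in atTop, 0 < c * m ^ 2 + b * m + d := by
  have h : Tendsto (fun m : ℝ => m * (c * m + b) + d) atTop atTop :=
    tendsto_atTop_add_const_right _ d (tendsto_id.atTop_mul_atTop₀
      (tendsto_atTop_add_const_right _ b (tendsto_id.const_mul_atTop hc)))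
  exact (h.eventually_gt_atTop 0).mono fun m hm => by linarith

lemma tendsto_natCast_sub_one_atTop : Tendsto (fun n : ℕ => (n : ℝ) - 1) atTop atTop := by
  simpa only [sub_eq_add_neg] using
    tendsto_atTop_add_const_right _ (-1 : ℝ) tendsto_natCast_atTop_atTop

lemma eventually_psiH_pos {H t : ℝ} (hH : 1 / 2 < H) (ht : H - 1 / 2 < t) (ht1 : t < 1) :
    ∀ᶠ n : ℕ in atTop, 0 < psiH H n (((n : ℝ) - 1) * t) := by
  have hc : 0 < (1 - t) * (t - (H - 1 / 2)) := mul_pos (by linarith) (by linarith)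
  filter_upwards [tendsto_natCast_sub_one_atTop.eventually
      (eventually_quadratic_pos hc (-2 * (H - 1 / 2) * (1 - t)) (-(H - 1 / 2))),
    tendsto_natCast_sub_one_atTop.eventually_gt_atTop 0] with n hq hm
  rw [psiH_eq (a := ((n : ℝ) - 1) * (1 - t)) (by ring), sub_pos]
  exact rpow_add_one_sub_rpow_lt_mul_rpow_sub_rpow (by linarith) (by linarith)
    (mul_pos hm (by linarith)) (mul_nonneg hm.le (by linarith)) (by linarith)

lemma eventually_psiH_neg {H t : ℝ} (hH' : H < 3 / 2) (ht0 : 0 < t)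
    (ht : t < H - 1 / 2) : ∀ᶠ n : ℕ in atTop, psiH H n (((n : ℝ) - 1) * t) < 0 := by
  have hc : 0 < (1 - t) * (H - 1 / 2 - t) := mul_pos (by linarith) (by linarith)
  filter_upwards [tendsto_natCast_sub_one_atTop.eventually
      (eventually_quadratic_pos hc (-(3 / 2 - H) * t) 0),
    tendsto_natCast_sub_one_atTop.eventually_gt_atTop 0] with n hq hm
  rw [psiH_eq (a := ((n : ℝ) - 1) * (1 - t)) (by ring), sub_neg]
  exact mul_rpow_sub_rpow_lt_rpow_add_one_sub_rpow (by linarith) (by linarith)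
    (mul_pos hm (by linarith)) (mul_nonneg hm.le ht0.le) (by linarith)

lemma tendsto_div_of_psiH_eq_zero {H : ℝ} (hH : 1 / 2 < H) (hH' : H < 3 / 2) {xn : ℕ → ℝ}
    (hxn : ∀ n : ℕ, 1 < n → xn n ∈ Ioo 0 ((n : ℝ) - 1) ∧ psiH H n (xn n) = 0) :
    Tendsto (fun n => xn n / ((n : ℝ) - 1)) atTop (𝓝 (H - 1 / 2)) := by
  have hm : ∀ n : ℕ, 1 < n → (0 : ℝ) < n - 1 := fun n hn => sub_pos.2 (Nat.one_lt_cast.2 hn)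
  have hmem : ∀ n : ℕ, 1 < n → ∀ {t : ℝ}, 0 < t → t < 1 →
      ((n : ℝ) - 1) * t ∈ Ico 0 ((n : ℝ) - 1) := fun n hn t ht0 ht1 =>
    ⟨mul_nonneg (hm n hn).le ht0.le, mul_lt_of_lt_one_right (hm n hn) ht1⟩
  have hroot : ∀ n : ℕ, 1 < n → xn n ∈ Ico 0 ((n : ℝ) - 1) := fun n hn =>
    Ioo_subset_Ico_self (hxn n hn).1
  refine tendsto_order.2 ⟨fun t ht => ?_, fun t ht => ?_⟩
  · rcases le_or_gt t 0 with ht0 | ht0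
    · filter_upwards [eventually_gt_atTop 1] with n hn
      exact ht0.trans_lt (div_pos (hxn n hn).1.1 (hm n hn))
    · filter_upwards [eventually_gt_atTop 1, eventually_psiH_neg hH' ht0 ht] with n hn hneg
      have := (psiH_neg_iff hH' (hroot n hn) (hxn n hn).2 (hmem n hn ht0 (by linarith))).1 hneg
      rw [lt_div_iff₀ (hm n hn)]
      linarith
  · rcases le_or_gt 1 t with ht1 | ht1
    · filter_upwards [eventually_gt_atTop 1] with n hn
      exact ((div_lt_one (hm n hn)).2 (hxn n hn).1.2).trans_le ht1
    · filter_upwards [eventually_gt_atTop 1, eventually_psiH_pos hH ht ht1] with n hn hpos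
      have := (psiH_pos_iff hH' (hroot n hn) (hxn n hn).2 (hmem n hn (by linarith) ht1)).1 hpos
      rw [div_lt_iff₀ (hm n hn)]
      linarith

/-- Lemma A.1: for each `n > 1` there is a unique `x_n ∈ (0, n-1)` such that
`g_n(x) = x^{1/2-H} φ_n^H(x)` is strictly decreasing on `(0, x_n)` and strictly increasing on
`(x_n, n-1)`; moreover `x_n / (n-1) → H - 1/2`. -/
theorem statement16 (H : ℝ) (hH : H ∈ Set.Ioo (1 / 2 : ℝ) 1) :
    (∀ n : ℕ, 1 < n → ∃! x : ℝ, x ∈ Set.Ioo (0 : ℝ) ((n : ℝ) - 1) ∧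
      StrictAntiOn (gmap H n) (Set.Ioo 0 x) ∧
      StrictMonoOn (gmap H n) (Set.Ioo x ((n : ℝ) - 1))) ∧
    ∀ xn : ℕ → ℝ,
      (∀ n : ℕ, 1 < n → xn n ∈ Set.Ioo (0 : ℝ) ((n : ℝ) - 1) ∧
        StrictAntiOn (gmap H n) (Set.Ioo 0 (xn n)) ∧
        StrictMonoOn (gmap H n) (Set.Ioo (xn n) ((n : ℝ) - 1))) →
      Tendsto (fun n => xn n / ((n : ℝ) - 1)) atTop (nhds (H - 1 / 2)) := by
  obtain ⟨hH, hH1⟩ := hH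
  have hH' : H < 3 / 2 := by linarith
  have hvalley : ∀ n : ℕ, 1 < n →
      ∃ r, IsStrictValley (gmap H n) 0 ((n : ℝ) - 1) r ∧ psiH H n r = 0 := fun n hn =>
    let ⟨r, hr, hr0⟩ := exists_psiH_eq_zero hH hH' hn
    ⟨r, isStrictValley_gmap hH hH' hr hr0, hr0⟩
  refine ⟨fun n hn => ?_, fun xn hxn => tendsto_div_of_psiH_eq_zero hH hH' fun n hn => ?_⟩
  · obtain ⟨r, hr, -⟩ := hvalley n hn
    exact ⟨r, hr, fun y hy => IsStrictValley.unique hy hr⟩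
  · obtain ⟨r, hr, hr0⟩ := hvalley n hn
    exact ⟨(hxn n hn).1, IsStrictValley.unique (hxn n hn) hr ▸ hr0⟩

end
end

section
/- For every h ∈ (1/2,3/4) and every integer k ≥ 1, ρ_h(k) ≥ h·(2h−1)/(2·k^{2−2h}). Consequently Σ_{k=1}^∞ ρ_h(k)² ≥ (h²·(2h−1)²/4)·ζ(4−4h), where ζ is the Riemann zeta function, and therefore lim_{h→3/4−} Σ_{k=1}^∞ ρ_h(k)² = ∞. -/
open MeasureTheory Filter Set ProbabilityTheory

noncomputable section

/-!
With `p = 2h` and `x = 1/k`, `ρ_h(k) = k^p ((1 + x)^p + (1 - x)^p - 2) / 2`. For `p ∈ [1, 2]`,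
comparing derivatives on `[0, 1]` gives `2 + p(p-1)x² ≤ (1 + x)^p + (1 - x)^p ≤ 2 + p x²`, that is
`h(2h-1) k^{2h-2} ≤ ρ_h(k) ≤ h k^{2h-2}`; the derivative comparison for the lower bound reduces to
`(1 + x)^{p-2} + (1 - x)^{p-2} ≥ 2`, which is AM-GM since `(1 + x)(1 - x) ≤ 1`. Squaring the lower
bound and summing gives the zeta bound (the upper bound makes `∑ ρ_h(k)²` summable). Finally, each
term of `∑ (n + 1)^{-s}` is continuous in `s` and the harmonic series diverges, so the series tends
to `∞` as `s → 1⁺`, and with it `∑ ρ_h(k)²` as `h → 3/4⁻`.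
-/

open scoped Topology

lemma two_le_rpow_add_rpow {a b r : ℝ} (ha : 0 < a) (hb : 0 < b) (hab : a * b ≤ 1)
    (hr : r ≤ 0) : 2 ≤ a ^ r + b ^ r := by
  have hgm : 1 ≤ a ^ (r / 2) * b ^ (r / 2) := by
    rw [← Real.mul_rpow ha.le hb.le]
    exact Real.one_le_rpow_of_pos_of_le_one_of_nonpos (by positivity) hab (by linarith)
  have hsq (c : ℝ) (hc : 0 < c) : c ^ r = (c ^ (r / 2)) ^ 2 := by
    rw [← Real.rpow_mul_natCast hc.le]; norm_num
  rw [hsq a ha, hsq b hb]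
  nlinarith [sq_nonneg (a ^ (r / 2) - b ^ (r / 2))]

lemma hasDerivAt_one_add_rpow {p x : ℝ} (hx : -1 < x) :
    HasDerivAt (fun y : ℝ => (1 + y) ^ p) (p * (1 + x) ^ (p - 1)) x := by
  simpa using ((hasDerivAt_id x).const_add 1).rpow_const (p := p)
    (Or.inl (by simp only [id]; linarith))

lemma hasDerivAt_one_sub_rpow {p x : ℝ} (hx : x < 1) :
    HasDerivAt (fun y : ℝ => (1 - y) ^ p) (-(p * (1 - x) ^ (p - 1))) x := by
  simpa using ((hasDerivAt_id x).const_sub 1).rpow_const (p := p)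
    (Or.inl (by simp only [id]; linarith))

lemma hasDerivAt_one_add_rpow_add_one_sub_rpow {p x : ℝ} (hx : x ∈ Ico (0 : ℝ) 1) :
    HasDerivAt (fun y : ℝ => (1 + y) ^ p + (1 - y) ^ p)
      (p * ((1 + x) ^ (p - 1) - (1 - x) ^ (p - 1))) x :=
  ((hasDerivAt_one_add_rpow (by linarith [hx.1])).add
    (hasDerivAt_one_sub_rpow hx.2)).congr_deriv (by ring)

lemma two_mul_mul_le_one_add_rpow_sub_one_sub_rpow {q x : ℝ} (hq0 : 0 ≤ q) (hq1 : q ≤ 1)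
    (hx : x ∈ Icc (0 : ℝ) 1) : 2 * q * x ≤ (1 + x) ^ q - (1 - x) ^ q := by
  refine image_le_of_deriv_right_le_deriv_boundary (f' := fun _ => 2 * q)
    (B' := fun y => q * (1 + y) ^ (q - 1) - -(q * (1 - y) ^ (q - 1))) (by fun_prop)
    (fun y _ => by simpa using ((hasDerivAt_id y).const_mul (2 * q)).hasDerivWithinAt)
    (by simp) (by fun_prop (disch := assumption))
    (fun y hy => ((hasDerivAt_one_add_rpow (by linarith [hy.1])).sub
      (hasDerivAt_one_sub_rpow hy.2)).hasDerivWithinAt) (fun y hy => ?_) hx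
  have := two_le_rpow_add_rpow (r := q - 1) (by linarith [hy.1] : (0 : ℝ) < 1 + y)
    (by linarith [hy.2] : (0 : ℝ) < 1 - y) (by nlinarith [hy.1]) (by linarith)
  nlinarith

lemma one_add_rpow_sub_one_sub_rpow_le {q x : ℝ} (hq1 : q ≤ 1) (hx : x ∈ Icc (0 : ℝ) 1) :
    (1 + x) ^ q - (1 - x) ^ q ≤ 2 * x := by
  have h1 : (1 + x) ^ q ≤ 1 + x := Real.rpow_le_self_of_one_le (by linarith [hx.1]) hq1
  have h2 : 1 - x ≤ (1 - x) ^ q :=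
    Real.self_le_rpow_of_le_one (by linarith [hx.2]) (by linarith [hx.1]) hq1
  linarith

lemma two_add_mul_sq_le_one_add_rpow_add_one_sub_rpow {p x : ℝ} (hp1 : 1 ≤ p) (hp2 : p ≤ 2)
    (hx : x ∈ Icc (0 : ℝ) 1) : 2 + p * (p - 1) * x ^ 2 ≤ (1 + x) ^ p + (1 - x) ^ p := by
  refine image_le_of_deriv_right_le_deriv_boundary (f := fun y => 2 + p * (p - 1) * y ^ 2)
    (f' := fun y => p * (p - 1) * (2 * y)) (by fun_prop)
    (fun y _ => by simpa using ((hasDerivAt_pow 2 y).const_mul (p * (p - 1))).const_add 2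
      |>.hasDerivWithinAt)
    (by norm_num) (by fun_prop (disch := linarith))
    (fun y hy => (hasDerivAt_one_add_rpow_add_one_sub_rpow hy).hasDerivWithinAt)
    (fun y hy => ?_) hx
  have := two_mul_mul_le_one_add_rpow_sub_one_sub_rpow (q := p - 1) (by linarith) (by linarith)
    (Ico_subset_Icc_self hy)
  nlinarith

lemma one_add_rpow_add_one_sub_rpow_le {p x : ℝ} (hp1 : 1 ≤ p) (hp2 : p ≤ 2)
    (hx : x ∈ Icc (0 : ℝ) 1) : (1 + x) ^ p + (1 - x) ^ p ≤ 2 + p * x ^ 2 := by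
  refine image_le_of_deriv_right_le_deriv_boundary (B := fun y => 2 + p * y ^ 2)
    (B' := fun y => p * (2 * y)) (by fun_prop (disch := linarith))
    (fun y hy => (hasDerivAt_one_add_rpow_add_one_sub_rpow hy).hasDerivWithinAt)
    (by norm_num) (by fun_prop)
    (fun y _ => by simpa using ((hasDerivAt_pow 2 y).const_mul p).const_add 2
      |>.hasDerivWithinAt)
    (fun y hy => ?_) hx
  have := one_add_rpow_sub_one_sub_rpow_le (q := p - 1) (by linarith) (Ico_subset_Icc_self hy)
  nlinarith

lemma rho_eq_rpow_mul {k : ℕ} (hk : 1 ≤ k) (h : ℝ) :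
    rho h k = (k : ℝ) ^ (2 * h) * ((1 + 1 / k) ^ (2 * h) + (1 - 1 / k) ^ (2 * h) - 2) / 2 := by
  have hk : (1 : ℝ) ≤ k := by exact_mod_cast hk
  have hscale (y : ℝ) (hy : 0 ≤ 1 + y / k) :
      ((k : ℝ) + y) ^ (2 * h) = (k : ℝ) ^ (2 * h) * (1 + y / k) ^ (2 * h) := by
    rw [← Real.mul_rpow (by positivity) hy, mul_add, mul_div_cancel₀ _ (by positivity), mul_one]
  rw [rho, hscale 1 (by positivity), sub_eq_add_neg (k : ℝ), hscale (-1)]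
  · ring_nf
  · rw [neg_div, ← sub_eq_add_neg, sub_nonneg, div_le_one (by positivity)]
    exact hk

lemma one_div_natCast_mem_Icc {k : ℕ} (hk : 1 ≤ k) : 1 / (k : ℝ) ∈ Icc (0 : ℝ) 1 :=
  ⟨by positivity, by rw [div_le_one (by positivity)]; exact_mod_cast hk⟩

lemma natCast_rpow_sub_two {k : ℕ} (hk : 1 ≤ k) (h : ℝ) :
    (k : ℝ) ^ (2 * h - 2) = (k : ℝ) ^ (2 * h) * (1 / k) ^ 2 := by
  rw [Real.rpow_sub (by positivity), Real.rpow_two]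
  ring

lemma mul_rpow_le_rho {h : ℝ} (hh1 : 1 / 2 ≤ h) (hh2 : h ≤ 1) {k : ℕ} (hk : 1 ≤ k) :
    h * (2 * h - 1) * (k : ℝ) ^ (2 * h - 2) ≤ rho h k := by
  have := two_add_mul_sq_le_one_add_rpow_add_one_sub_rpow (p := 2 * h) (by linarith)
    (by linarith) (one_div_natCast_mem_Icc hk)
  rw [rho_eq_rpow_mul hk, natCast_rpow_sub_two hk]
  have : 0 ≤ (k : ℝ) ^ (2 * h) := by positivity
  nlinarith

lemma rho_le_mul_rpow {h : ℝ} (hh1 : 1 / 2 ≤ h) (hh2 : h ≤ 1) {k : ℕ} (hk : 1 ≤ k) :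
    rho h k ≤ h * (k : ℝ) ^ (2 * h - 2) := by
  have := one_add_rpow_add_one_sub_rpow_le (p := 2 * h) (by linarith)
    (by linarith) (one_div_natCast_mem_Icc hk)
  rw [rho_eq_rpow_mul hk, natCast_rpow_sub_two hk]
  have : 0 ≤ (k : ℝ) ^ (2 * h) := by positivity
  nlinarith

lemma div_two_mul_rpow_le_rho {h : ℝ} (hh1 : 1 / 2 ≤ h) (hh2 : h ≤ 1) {k : ℕ} (hk : 1 ≤ k) :
    h * (2 * h - 1) / (2 * (k : ℝ) ^ (2 - 2 * h)) ≤ rho h k := by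
  have hc : 0 ≤ h * (2 * h - 1) * (k : ℝ) ^ (2 * h - 2) := by
    have : 0 ≤ 2 * h - 1 := by linarith
    positivity
  calc h * (2 * h - 1) / (2 * (k : ℝ) ^ (2 - 2 * h))
      = h * (2 * h - 1) * (k : ℝ) ^ (2 * h - 2) / 2 := by
        rw [show 2 - 2 * h = -(2 * h - 2) by ring, Real.rpow_neg (by positivity)]
        field_simp
    _ ≤ rho h k := by linarith [mul_rpow_le_rho hh1 hh2 hk]

lemma summable_natCast_add_one_rpow {s : ℝ} (hs : s < -1) :
    Summable fun n : ℕ => ((n : ℝ) + 1) ^ s := by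
  simpa using (summable_nat_add_iff 1).mpr (Real.summable_nat_rpow.mpr hs)

lemma summable_rho_succ_sq {h : ℝ} (hh1 : 1 / 2 ≤ h) (hh2 : h < 3 / 4) :
    Summable fun k : ℕ => rho h (k + 1) ^ 2 := by
  refine .of_nonneg_of_le (fun k => sq_nonneg _) (fun k => ?_)
    ((summable_natCast_add_one_rpow (s := (2 * h - 2) * 2) (by linarith)).mul_left (h ^ 2))
  have hk : 1 ≤ k + 1 := by omega
  have hlow := mul_rpow_le_rho hh1 (by linarith) hk
  have hup := rho_le_mul_rpow hh1 (by linarith) hk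
  push_cast at hlow hup
  have : 0 ≤ h * (2 * h - 1) * ((k : ℝ) + 1) ^ (2 * h - 2) := by
    have : 0 ≤ 2 * h - 1 := by linarith
    positivity
  calc rho h (k + 1) ^ 2 ≤ (h * ((k : ℝ) + 1) ^ (2 * h - 2)) ^ 2 := by gcongr; linarith
    _ = h ^ 2 * ((k : ℝ) + 1) ^ ((2 * h - 2) * 2) := by
        rw [mul_pow, ← Real.rpow_mul_natCast (by positivity)]; norm_num

lemma mul_tsum_le_tsum_rho_succ_sq {h : ℝ} (hh1 : 1 / 2 ≤ h) (hh2 : h < 3 / 4) :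
    (h ^ 2 * (2 * h - 1) ^ 2 / 4) * (∑' n : ℕ, ((n : ℝ) + 1) ^ (-(4 - 4 * h))) ≤
      ∑' k : ℕ, rho h (k + 1) ^ 2 := by
  rw [← tsum_mul_left]
  refine Summable.tsum_le_tsum (fun k => ?_)
    ((summable_natCast_add_one_rpow (by linarith)).mul_left _) (summable_rho_succ_sq hh1 hh2)
  have hk : 1 ≤ k + 1 := by omega
  have hlow := div_two_mul_rpow_le_rho hh1 (by linarith) hk
  push_cast at hlow
  have hpos : 0 < ((k : ℝ) + 1) ^ (2 - 2 * h) := by positivity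
  calc h ^ 2 * (2 * h - 1) ^ 2 / 4 * ((k : ℝ) + 1) ^ (-(4 - 4 * h))
      = (h * (2 * h - 1) / (2 * ((k : ℝ) + 1) ^ (2 - 2 * h))) ^ 2 := by
        rw [show -(4 - 4 * h) = -((2 - 2 * h) * (2 : ℕ)) by push_cast; ring,
          Real.rpow_neg (by positivity), Real.rpow_mul_natCast (by positivity)]
        field_simp
        ring
    _ ≤ rho h (k + 1) ^ 2 := by
        have : 0 ≤ 2 * h - 1 := by linarith
        gcongr

lemma tendsto_tsum_atTop_of_not_summable {α : Type*} {l : Filter α} {F : α → ℕ → ℝ}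
    {g : ℕ → ℝ} (hF : ∀ a n, 0 ≤ F a n) (hsum : ∀ᶠ a in l, Summable (F a))
    (hlim : ∀ n, Tendsto (fun a => F a n) l (𝓝 (g n))) (hg0 : ∀ n, 0 ≤ g n)
    (hg : ¬Summable g) : Tendsto (fun a => ∑' n, F a n) l atTop := by
  rw [tendsto_atTop]
  intro M
  obtain ⟨N, hN⟩ :=
    (((not_summable_iff_tendsto_nat_atTop_of_nonneg hg0).1 hg).eventually_gt_atTop M).exists
  have hpartial : Tendsto (fun a => ∑ n ∈ Finset.range N, F a n) l
      (𝓝 (∑ n ∈ Finset.range N, g n)) := tendsto_finsetSum _ fun n _ => hlim n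
  filter_upwards [hpartial.eventually (eventually_ge_nhds hN), hsum] with a ha hs
  exact ha.trans (hs.sum_le_tsum _ fun n _ => hF a n)

lemma tendsto_tsum_natCast_add_one_rpow_neg_atTop :
    Tendsto (fun s : ℝ => ∑' n : ℕ, ((n : ℝ) + 1) ^ (-s)) (𝓝[>] 1) atTop := by
  refine tendsto_tsum_atTop_of_not_summable (g := fun n => ((n : ℝ) + 1) ^ (-1 : ℝ))
    (fun s n => by positivity) ?_ (fun n => ?_) (fun n => by positivity) ?_
  · filter_upwards [self_mem_nhdsWithin] with s hs
    exact summable_natCast_add_one_rpow (by linarith [mem_Ioi.1 hs])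
  · exact ((Real.continuousAt_const_rpow (by positivity)).tendsto.comp
      (continuous_neg.tendsto 1)).mono_left nhdsWithin_le_nhds
  · simpa [Real.rpow_neg_one] using (summable_nat_add_iff 1).not.mpr Real.not_summable_natCast_inv

lemma tendsto_four_sub_four_mul_nhdsGT_one :
    Tendsto (fun h : ℝ => 4 - 4 * h) (𝓝[Ioo (1 / 2) (3 / 4)] (3 / 4)) (𝓝[>] 1) := by
  refine tendsto_nhdsWithin_iff.2 ⟨?_, ?_⟩
  · exact ((by fun_prop : Continuous fun h : ℝ => 4 - 4 * h).tendsto' _ _ (by norm_num)).mono_left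
      nhdsWithin_le_nhds
  · filter_upwards [self_mem_nhdsWithin] with h hh
    exact mem_Ioi.2 (by linarith [hh.2])

/-- Lemma A.4: for `h ∈ (1/2,3/4)` and `k ≥ 1`, `ρ_h(k) ≥ h(2h-1)/(2 k^{2-2h})`; consequently
`∑_{k≥1} ρ_h(k)² ≥ (h²(2h-1)²/4) ζ(4-4h)` (with `ζ(s) = ∑_{n≥1} n^{-s}`), and therefore
`∑_{k≥1} ρ_h(k)² → ∞` as `h → 3/4⁻`. -/
theorem statement18 :
    (∀ h : ℝ, h ∈ Set.Ioo (1 / 2 : ℝ) (3 / 4) →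
      (∀ k : ℕ, 1 ≤ k → h * (2 * h - 1) / (2 * (k : ℝ) ^ (2 - 2 * h)) ≤ rho h k) ∧
      (h ^ 2 * (2 * h - 1) ^ 2 / 4) * (∑' n : ℕ, ((n : ℝ) + 1) ^ (-(4 - 4 * h))) ≤
        ∑' k : ℕ, (rho h (k + 1)) ^ 2) ∧
    Tendsto (fun h : ℝ => ∑' k : ℕ, (rho h (k + 1)) ^ 2)
      (nhdsWithin (3 / 4) (Set.Ioo (1 / 2 : ℝ) (3 / 4))) atTop := by
  refine ⟨fun h hh => ⟨fun k hk => div_two_mul_rpow_le_rho hh.1.le (by linarith [hh.2]) hk,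
    mul_tsum_le_tsum_rho_succ_sq hh.1.le hh.2⟩, ?_⟩
  have hconst : Tendsto (fun h : ℝ => h ^ 2 * (2 * h - 1) ^ 2 / 4)
      (𝓝[Ioo (1 / 2) (3 / 4)] (3 / 4)) (𝓝 ((3 / 4) ^ 2 * (2 * (3 / 4) - 1) ^ 2 / 4)) :=
    ((by fun_prop : Continuous fun h : ℝ => h ^ 2 * (2 * h - 1) ^ 2 / 4).tendsto _).mono_left
      nhdsWithin_le_nhds
  have hzeta := tendsto_tsum_natCast_add_one_rpow_neg_atTop.comp
    tendsto_four_sub_four_mul_nhdsGT_one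
  refine tendsto_atTop_mono' _ ?_ (hconst.pos_mul_atTop (by norm_num) hzeta)
  filter_upwards [self_mem_nhdsWithin] with h hh
  exact mul_tsum_le_tsum_rho_succ_sq hh.1.le hh.2

end
end
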